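/- arXiv:2002.04783 — 5 statements merged into one kernel-verified Lean document; each statement's English description precedes it below -/
import Mathlib

section
/- Let θ_0 = 1 and θ_{t+1} = θ_t(√(θ_t² + 4) − θ_t)/2 for all t ≥ 0. Then 0 < θ_t ≤ 2/(t+2) for all t ≥ 0. -/
/-!
With `y = θ_{t+1}` and `x = θ_t`, `y` is the positive root of `y² + x² y - x² = 0`, which in terms of
the reciprocals reads `1/y² - 1/y = 1/x²`. Completing the square, `(1/y - 1/2)² = 1/x² + 1/4`,
so `1/θ_{t+1} ≥ 1/θ_t + 1/2` and hence `1/θ_t ≥ 1 + t/2`.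
-/

noncomputable def thetaStep (x : ℝ) : ℝ := x * (Real.sqrt (x ^ 2 + 4) - x) / 2

lemma lt_sqrt_sq_add_four (x : ℝ) : x < Real.sqrt (x ^ 2 + 4) := by
  have hsq : Real.sqrt (x ^ 2 + 4) ^ 2 = x ^ 2 + 4 := Real.sq_sqrt (by positivity)
  nlinarith [Real.sqrt_nonneg (x ^ 2 + 4)]

lemma thetaStep_pos {x : ℝ} (hx : 0 < x) : 0 < thetaStep x :=
  div_pos (mul_pos hx (sub_pos.mpr (lt_sqrt_sq_add_four x))) two_pos

lemma thetaStep_sq (x : ℝ) : thetaStep x ^ 2 = x ^ 2 * (1 - thetaStep x) := by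
  have hsq : Real.sqrt (x ^ 2 + 4) ^ 2 = x ^ 2 + 4 := Real.sq_sqrt (by positivity)
  unfold thetaStep
  linear_combination x ^ 2 / 4 * hsq

lemma inv_add_half_le_inv {x y : ℝ} (hx : 0 < x) (hy : 0 < y) (h : y ^ 2 = x ^ 2 * (1 - y)) :
    x⁻¹ + 1 / 2 ≤ y⁻¹ := by
  have hy1 : y < 1 := by nlinarith [mul_pos (mul_pos hx hx) hy]
  have hrecip : (y⁻¹ - 1 / 2) ^ 2 = x⁻¹ ^ 2 + 1 / 4 := by
    field_simp
    linear_combination (-16) * h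
  have hpos : 0 ≤ y⁻¹ - 1 / 2 := by
    have : 1 < y⁻¹ := (one_lt_inv₀ hy).mpr hy1
    linarith
  have : x⁻¹ ≤ y⁻¹ - 1 / 2 := abs_le_of_sq_le_sq' (by nlinarith) hpos |>.2
  linarith

theorem theta_bound (θ : ℕ → ℝ) (h0 : θ 0 = 1)
    (hrec : ∀ t : ℕ, θ (t + 1) = θ t * (Real.sqrt ((θ t) ^ 2 + 4) - θ t) / 2) :
    ∀ t : ℕ, 0 < θ t ∧ θ t ≤ 2 / (t + 2) := by
  have hinv_bound : ∀ t : ℕ, 0 < θ t ∧ ((t : ℝ) + 2) / 2 ≤ (θ t)⁻¹ := by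
    intro t
    induction t with
    | zero => norm_num [h0]
    | succ t ih =>
      obtain ⟨hpos, hinv⟩ := ih
      have hstep : θ (t + 1) = thetaStep (θ t) := hrec t
      have hnext := inv_add_half_le_inv hpos (thetaStep_pos hpos) (thetaStep_sq (θ t))
      rw [hstep]
      refine ⟨thetaStep_pos hpos, ?_⟩
      push_cast
      linarith
  intro t
  obtain ⟨hpos, hinv⟩ := hinv_bound t
  refine ⟨hpos, ?_⟩
  rw [← inv_div]
  exact (le_inv_comm₀ (by positivity) hpos).mp hinv
end

section
/- A {−1,0,1}-valued matrix A in which every column has at most two nonzero entries is totally unimodular provided its rows can be partitioned into two sets I₁ and I₂ such that: if two nonzero entries of a column have the same sign, their rows lie in different sets, and if they have opposite signs, their rows lie in the same set. -/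
/-!
Weight row `i` by `s i = 1` if `i ∈ I₁` and `s i = -1` if `i ∈ I₂`; the partition condition says
exactly that the two weighted nonzero entries of a column cancel. Induct on the size of a square
submatrix `M`. If some column of `M` has at most one nonzero entry, expand the determinant along
it. Otherwise every column of `M` contains both nonzero entries of the corresponding column of the
whole matrix, so the restriction of `s` is a nonzero vector with `s ᵥ* M = 0`, and `det M = 0`.
-/

/-- A matrix with integer entries is totally unimodular if every square submatrix
(given by injective choices of rows and columns) has determinant in {-1, 0, 1}. -/
def IsTotallyUnimodular' {m n : ℕ} (A : Matrix (Fin m) (Fin n) ℤ) : Prop :=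
  ∀ (k : ℕ) (f : Fin k → Fin m) (g : Fin k → Fin n),
    Function.Injective f → Function.Injective g →
      (A.submatrix f g).det ∈ ({-1, 0, 1} : Set ℤ)

theorem Int.mem_range_signTypeCast_iff {x : ℤ} :
    x ∈ Set.range SignType.cast ↔ x ∈ ({-1, 0, 1} : Set ℤ) := by
  constructor
  · rintro ⟨s, rfl⟩
    cases s <;> simp
  · rintro (rfl | rfl | rfl)
    exacts [⟨-1, by simp⟩, ⟨0, by simp⟩, ⟨1, by simp⟩]

lemma eq_or_eq_of_encard_support_le_two {m Z : Type*} [Zero Z] {x : m → Z}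
    (hx : {i | x i ≠ 0}.encard ≤ 2) {i₁ i₂ i : m} (h12 : i₁ ≠ i₂) (h₁ : x i₁ ≠ 0) (h₂ : x i₂ ≠ 0)
    (h : x i ≠ 0) : i = i₁ ∨ i = i₂ := by
  by_contra! hi
  have hsub : ({i, i₁, i₂} : Set m) ⊆ {i | x i ≠ 0} := by
    rintro _ (rfl | rfl | rfl) <;> assumption
  have := (Set.encard_le_encard hsub).trans hx
  rw [Set.encard_insert_of_notMem (by simpa using hi), Set.encard_pair h12] at this
  exact absurd this (by decide)

namespace Matrix

variable {m n R : Type*} [CommRing R]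

lemma det_mem_range_signTypeCast_of_column {k : ℕ} {M : Matrix (Fin (k + 1)) (Fin (k + 1)) R}
    {r c : Fin (k + 1)} (hc : ∀ r', r' ≠ r → M r' c = 0) (hrc : M r c ∈ Set.range SignType.cast)
    (hminor : (M.submatrix r.succAbove c.succAbove).det ∈ Set.range SignType.cast) :
    M.det ∈ Set.range SignType.cast := by
  rw [det_succ_column M c, Fintype.sum_eq_single r fun r' h => by simp [hc r' h]]
  change _ ∈ MonoidHom.mrange SignType.castHom.toMonoidHom
  exact mul_mem (mul_mem (pow_mem (by exact ⟨-1, by simp⟩) _) hrc) hminor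

lemma sum_comp_mul_eq_zero_of_pair_cancel {ι : Type*} [Fintype ι] {x s : m → R}
    (hx : {i | x i ≠ 0}.encard ≤ 2)
    (hs : ∀ i₁ i₂, i₁ ≠ i₂ → x i₁ ≠ 0 → x i₂ ≠ 0 → s i₁ * x i₁ + s i₂ * x i₂ = 0)
    {f : ι → m} (hf : f.Injective) {r₁ r₂ : ι} (hr : r₁ ≠ r₂) (h₁ : x (f r₁) ≠ 0)
    (h₂ : x (f r₂) ≠ 0) :
    ∑ r, s (f r) * x (f r) = 0 := by
  rw [Fintype.sum_eq_add r₁ r₂ hr fun r ⟨hr₁, hr₂⟩ => ?_]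
  · exact hs _ _ (hf.ne hr) h₁ h₂
  by_contra h
  rcases eq_or_eq_of_encard_support_le_two hx (hf.ne hr) h₁ h₂ (right_ne_zero_of_mul h) with
    h' | h' <;> simp_all [hf.eq_iff]

theorem isTotallyUnimodular_of_pair_cancel [IsDomain R] {A : Matrix m n R}
    (hA : ∀ i j, A i j ∈ Set.range SignType.cast) (hcol : ∀ j, {i | A i j ≠ 0}.encard ≤ 2)
    (s : m → R) (hs0 : ∀ i, s i ≠ 0)
    (hs : ∀ j i₁ i₂, i₁ ≠ i₂ → A i₁ j ≠ 0 → A i₂ j ≠ 0 → s i₁ * A i₁ j + s i₂ * A i₂ j = 0) :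
    A.IsTotallyUnimodular := by
  intro k f g hf hg
  induction k with
  | zero => exact ⟨1, by simp⟩
  | succ k ih =>
    by_cases hpair : ∀ c, ∃ r₁ r₂, r₁ ≠ r₂ ∧ A (f r₁) (g c) ≠ 0 ∧ A (f r₂) (g c) ≠ 0
    · refine ⟨0, (exists_vecMul_eq_zero_iff.1 ⟨s ∘ f, fun h => hs0 (f 0) (congrFun h 0),
        funext fun c => ?_⟩).symm⟩
      obtain ⟨r₁, r₂, hr, h₁, h₂⟩ := hpair c
      exact sum_comp_mul_eq_zero_of_pair_cancel (hcol (g c)) (hs (g c)) hf hr h₁ h₂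
    push Not at hpair
    obtain ⟨c, hc⟩ := hpair
    by_cases hz : ∀ r, A (f r) (g c) = 0
    · exact ⟨0, (det_eq_zero_of_column_eq_zero c hz).symm⟩
    push Not at hz
    obtain ⟨r, hr⟩ := hz
    refine det_mem_range_signTypeCast_of_column (r := r) (c := c)
      (fun r' h => hc r r' h.symm hr) (hA _ _) ?_
    rw [submatrix_submatrix]
    exact ih _ _ (hf.comp Fin.succAbove_right_injective) (hg.comp Fin.succAbove_right_injective)

end Matrix

lemma Int.ite_mul_add_ite_mul_eq_zero {a₁ a₂ : ℤ} {b₁ b₂ : Bool} (ha₁ : a₁ ∈ ({-1, 0, 1} : Set ℤ))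
    (ha₂ : a₂ ∈ ({-1, 0, 1} : Set ℤ)) (h₁ : a₁ ≠ 0) (h₂ : a₂ ≠ 0)
    (hsame : a₁ = a₂ → b₁ ≠ b₂) (hdiff : a₁ ≠ a₂ → b₁ = b₂) :
    (if b₁ then 1 else -1) * a₁ + (if b₂ then 1 else -1) * a₂ = 0 := by
  rcases ha₁ with rfl | rfl | rfl <;> rcases ha₂ with rfl | rfl | rfl <;>
    cases b₁ <;> cases b₂ <;> simp_all

theorem two_nonzeros_partition_TU {m n : ℕ} (A : Matrix (Fin m) (Fin n) ℤ)
    (hval : ∀ i j, A i j ∈ ({-1, 0, 1} : Set ℤ))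
    (hcol : ∀ j : Fin n, ({i : Fin m | A i j ≠ 0} : Finset (Fin m)).card ≤ 2)
    (hpart : ∃ p : Fin m → Bool, ∀ (j : Fin n) (i₁ i₂ : Fin m), i₁ ≠ i₂ →
      A i₁ j ≠ 0 → A i₂ j ≠ 0 →
        (A i₁ j = A i₂ j → p i₁ ≠ p i₂) ∧ (A i₁ j ≠ A i₂ j → p i₁ = p i₂)) :
    IsTotallyUnimodular' A := by
  obtain ⟨p, hp⟩ := hpart
  have hTU : A.IsTotallyUnimodular :=
    Matrix.isTotallyUnimodular_of_pair_cancel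
      (fun i j => Int.mem_range_signTypeCast_iff.2 (hval i j))
      (fun j => by
        rw [← Finset.coe_filter_univ, Set.encard_coe_eq_coe_finsetCard]
        exact_mod_cast hcol j)
      (fun i => if p i then 1 else -1) (fun i => by split_ifs <;> norm_num)
      fun j i₁ i₂ hne h₁ h₂ => Int.ite_mul_add_ite_mul_eq_zero (hval _ _) (hval _ _) h₁ h₂
        (hp j i₁ i₂ hne h₁ h₂).1 (hp j i₁ i₂ hne h₁ h₂).2
  exact fun k f g hf hg => Int.mem_range_signTypeCast_iff.1 (hTU k f g hf hg)
end

section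
/- (Ghouila-Houri, one direction) If an m×n matrix A with entries in {−1,0,1} is totally unimodular, then for every subset I of the rows there exists a partition I = I₁ ∪ I₂ (disjoint) such that for every column j, Σ_{i∈I₁} A_{ij} − Σ_{i∈I₂} A_{ij} ∈ {−1, 0, 1}. -/
/-!
Given `I`, let `s` be the vector of column sums of the rows in `I`. The vector `x = 𝟙_I / 2`
satisfies `⌊s / 2⌋ ≤ Aᵀ x ≤ ⌈s / 2⌉` and `0 ≤ x ≤ 𝟙_I`. This polyhedron is bounded, so it has
a vertex, i.e. a point fixed by a nonsingular square system of tight constraints. The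
constraint matrix is totally unimodular, so that system has determinant `±1` and the vertex is
integral: a `0/1` vector `z`, the indicator of `I₁`, with
`Σ_{I₁} A i j - Σ_{I \ I₁} A i j = 2 (Aᵀ z) j - s j ∈ [-1, 1]`.
-/

open Finset

namespace Matrix

section TotallyUnimodular

variable {m n R : Type*} [CommRing R]

theorem IsTotallyUnimodular.signType_mul_rows {A : Matrix m n R} (hA : A.IsTotallyUnimodular)
    (d : m → SignType) : (of fun i j => (d i : R) * A i j).IsTotallyUnimodular := by
  classical
  intro k f g hf hg
  rw [show (of fun i j => (d i : R) * A i j).submatrix f g =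
    of fun i j => (d (f i) : R) * A.submatrix f g i j from rfl, det_mul_column]
  change _ ∈ MonoidHom.mrange SignType.castHom.toMonoidHom
  exact mul_mem (prod_mem fun i _ => ⟨d (f i), rfl⟩) (hA k f g hf hg)

theorem IsTotallyUnimodular.fromRows_neg {A : Matrix m n R} (hA : A.IsTotallyUnimodular) :
    (fromRows A (-A)).IsTotallyUnimodular := by
  have h : fromRows A (-A) =
      of fun i j => (Sum.elim 1 (-1) i : SignType) * A.submatrix (Sum.elim id id) id i j := by
    ext (i | i) j <;> simp
  rw [h]
  exact (hA.submatrix _ _).signType_mul_rows _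

theorem IsTotallyUnimodular.isUnit_of_isUnit_map {A : Matrix n n ℤ} [Fintype n] [DecidableEq n]
    (hA : A.IsTotallyUnimodular) (hunit : IsUnit (A.map (Int.cast : ℤ → ℚ))) : IsUnit A := by
  obtain ⟨s, hs⟩ := (isTotallyUnimodular_iff_fintype A).1 hA n id id
  rw [submatrix_id_id] at hs
  have hdet : (A.det : ℚ) ≠ 0 := by
    rw [show (A.det : ℚ) = (A.map Int.cast).det from (Int.castRingHom ℚ).map_det A]
    exact ((isUnit_iff_isUnit_det _).1 hunit).ne_zero
  rw [isUnit_iff_isUnit_det, ← hs, Int.isUnit_iff]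
  rcases s with _ | _ | _ <;> simp_all [eq_comm]

end TotallyUnimodular

theorem map_intCast_mulVec {J ι R : Type*} [Fintype ι] [Ring R] (G : Matrix J ι ℤ) (z : ι → ℤ) :
    G.map (Int.cast : ℤ → R) *ᵥ (Int.cast ∘ z) = Int.cast ∘ (G *ᵥ z) :=
  funext fun j => ((Int.castRingHom R).map_mulVec G z j).symm

theorem exists_isUnit_submatrix_of_injective_mulVec {J ι K : Type*} [Field K] [Finite J]
    [Fintype ι] [DecidableEq ι] (M : Matrix J ι K) (hM : Function.Injective M.mulVec) :
    ∃ f : ι → J, IsUnit (M.submatrix f id) := by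
  have hrank : M.rank = Fintype.card ι := by
    rw [rank, LinearMap.finrank_range_of_inj hM, Module.finrank_fintype_fun_eq_card]
  have hspan : Submodule.span K (Set.range M.row) = ⊤ :=
    Submodule.eq_top_of_finrank_eq <| by
      rw [← rank_eq_finrank_span_row, hrank, Module.finrank_fintype_fun_eq_card]
  obtain ⟨κ, a, ha, hspan_a, hli⟩ := exists_linearIndependent' K M.row
  have : Fintype κ := have := Finite.of_injective a ha; Fintype.ofFinite κ
  have hcard : Fintype.card ι = Fintype.card κ := by
    rw [linearIndependent_iff_card_eq_finrank_span.1 hli, Set.finrank, hspan_a, hspan,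
      finrank_top, Module.finrank_fintype_fun_eq_card]
  let e := Fintype.equivOfCardEq hcard
  exact ⟨a ∘ e, linearIndependent_rows_iff_isUnit.1 (hli.comp e e.injective)⟩

section Polyhedron

variable {K J ι : Type*} [Field K] [LinearOrder K] [IsStrictOrderedRing K] [Fintype J] [Fintype ι]
  (G : Matrix J ι K) (b : J → K)

theorem exists_mulVec_le_slack_ssubset {x : ι → K} (hx : G *ᵥ x ≤ b) {w : ι → K}
    (hw : ∃ j, 0 < (G *ᵥ w) j) (htight : ∀ j, (G *ᵥ x) j = b j → (G *ᵥ w) j = 0) :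
    ∃ y, G *ᵥ y ≤ b ∧
      ({j | (G *ᵥ y) j < b j} : Finset J) ⊂ ({j | (G *ᵥ x) j < b j} : Finset J) := by
  have hslack : ∀ j, (G *ᵥ w) j ≠ 0 → (G *ᵥ x) j < b j := fun j hj =>
    (hx j).lt_of_ne fun h => hj (htight j h)
  obtain ⟨j₁, hj₁, hmin⟩ := ({j | 0 < (G *ᵥ w) j} : Finset J).exists_min_image
    (fun j => (b j - (G *ᵥ x) j) / (G *ᵥ w) j) (hw.imp fun j hj => by simpa using hj)
  simp only [mem_filter, mem_univ, true_and] at hj₁ hmin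
  -- step along `w` until the first constraint increasing along `w` becomes tight
  set t := (b j₁ - (G *ᵥ x) j₁) / (G *ᵥ w) j₁
  have ht : 0 ≤ t := div_nonneg (sub_nonneg.2 (hx j₁)) hj₁.le
  have hy : ∀ j, (G *ᵥ (x + t • w)) j = (G *ᵥ x) j + t * (G *ᵥ w) j := fun j => by
    simp [mulVec_add, mulVec_smul]
  refine ⟨x + t • w, fun j => ?_, ?_⟩
  · rw [hy]
    rcases le_or_gt ((G *ᵥ w) j) 0 with h | h
    · nlinarith [hx j]
    · linarith [(le_div_iff₀ h).1 (hmin j h)]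
  · refine (ssubset_iff_of_subset fun j => ?_).2 ⟨j₁, ?_, ?_⟩
    · simp only [mem_filter, mem_univ, true_and]
      intro hj
      by_contra hxj
      rw [hy, htight j ((hx j).antisymm (not_lt.1 hxj)), mul_zero, add_zero] at hj
      exact hxj hj
    · simpa using hslack j₁ hj₁.ne'
    · simp [hy, t, div_mul_cancel₀ _ hj₁.ne']

-- `hG` says that the polyhedron `G *ᵥ x ≤ b` contains no ray.
theorem exists_vertex_of_mulVec_le (hG : ∀ w ≠ 0, ∃ j, 0 < (G *ᵥ w) j) {x : ι → K}
    (hx : G *ᵥ x ≤ b) :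
    ∃ y, G *ᵥ y ≤ b ∧ ∀ w, (∀ j, (G *ᵥ y) j = b j → (G *ᵥ w) j = 0) → w = 0 := by
  induction hn : #({j | (G *ᵥ x) j < b j} : Finset J) using Nat.strong_induction_on
    generalizing x with
  | _ n ih =>
    by_cases hv : ∀ w, (∀ j, (G *ᵥ x) j = b j → (G *ᵥ w) j = 0) → w = 0
    · exact ⟨x, hx, hv⟩
    push Not at hv
    obtain ⟨w, hw, hw0⟩ := hv
    obtain ⟨y, hy, hlt⟩ := exists_mulVec_le_slack_ssubset G b hx (hG w hw0) hw
    exact ih _ (hn ▸ card_lt_card hlt) hy rfl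

end Polyhedron

namespace IsTotallyUnimodular

variable {J ι : Type*} [Fintype J] [Fintype ι] [DecidableEq ι]

theorem exists_intCast_eq_of_tight {G : Matrix J ι ℤ} (hG : G.IsTotallyUnimodular) (b : J → ℤ)
    {y : ι → ℚ}
    (hy : ∀ w : ι → ℚ, (∀ j, (G.map Int.cast *ᵥ y) j = b j → (G.map Int.cast *ᵥ w) j = 0) → w = 0) :
    ∃ z : ι → ℤ, y = (↑) ∘ z := by
  let M : Matrix {j // (G.map Int.cast *ᵥ y) j = b j} ι ℚ :=
    (G.map Int.cast).submatrix Subtype.val id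
  have hM : Function.Injective M.mulVec := fun u v huv => sub_eq_zero.1 <| hy _ fun j hj => by
    rw [mulVec_sub, Pi.sub_apply, sub_eq_zero]
    exact congrFun huv ⟨j, hj⟩
  obtain ⟨f, hf⟩ := exists_isUnit_submatrix_of_injective_mulVec M hM
  let Q : Matrix ι ι ℤ := G.submatrix (fun i => (f i).val) id
  have hQ : Q *ᵥ (Q⁻¹ *ᵥ fun i => b (f i)) = fun i => b (f i) := by
    rw [mulVec_mulVec, mul_nonsing_inv _ ((isUnit_iff_isUnit_det Q).1
      ((hG.submatrix _ _).isUnit_of_isUnit_map hf)), one_mulVec]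
  refine ⟨Q⁻¹ *ᵥ fun i => b (f i), mulVec_injective_iff_isUnit.2 hf (funext fun i => ?_)⟩
  calc (M.submatrix f id *ᵥ y) i = b (f i) := (f i).2
    _ = ((Q *ᵥ (Q⁻¹ *ᵥ fun i => b (f i))) i : ℤ) := by rw [hQ]
    _ = _ := congrFun (map_intCast_mulVec Q _).symm i

theorem exists_int_mulVec_le {G : Matrix J ι ℤ} (hG : G.IsTotallyUnimodular) (b : J → ℤ)
    (hbdd : ∀ w : ι → ℚ, w ≠ 0 → ∃ j, 0 < (G.map Int.cast *ᵥ w) j) {x : ι → ℚ}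
    (hx : G.map Int.cast *ᵥ x ≤ (↑) ∘ b) : ∃ z : ι → ℤ, G *ᵥ z ≤ b := by
  obtain ⟨y, hy, hvertex⟩ := exists_vertex_of_mulVec_le _ _ hbdd hx
  obtain ⟨z, rfl⟩ := hG.exists_intCast_eq_of_tight b hvertex
  rw [map_intCast_mulVec] at hy
  exact ⟨z, fun j => Int.cast_le.1 (hy j)⟩

theorem exists_int_mem_box {M : Matrix J ι ℤ} (hM : M.IsTotallyUnimodular) (lo hi : J → ℤ)
    (l u : ι → ℤ) {x : ι → ℚ}
    (hx : ∀ j, (lo j : ℚ) ≤ (M.map Int.cast *ᵥ x) j ∧ (M.map Int.cast *ᵥ x) j ≤ hi j)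
    (hxb : ∀ i, (l i : ℚ) ≤ x i ∧ x i ≤ u i) :
    ∃ z : ι → ℤ, (∀ j, lo j ≤ (M *ᵥ z) j ∧ (M *ᵥ z) j ≤ hi j) ∧ ∀ i, l i ≤ z i ∧ z i ≤ u i := by
  let N := fromRows M (1 : Matrix ι ι ℤ)
  have hN : (fromRows N (-N)).IsTotallyUnimodular :=
    ((fromRows_one_isTotallyUnimodular_iff M).2 hM).fromRows_neg
  have hmulVec (v : ι → ℚ) : (fromRows N (-N)).map Int.cast *ᵥ v =
      Sum.elim (Sum.elim (M.map Int.cast *ᵥ v) v) (-Sum.elim (M.map Int.cast *ᵥ v) v) := by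
    rw [fromRows_map, Matrix.map_neg _ Int.cast_neg, fromRows_mulVec, neg_mulVec, fromRows_map,
      Matrix.map_one _ Int.cast_zero Int.cast_one, fromRows_mulVec, one_mulVec]
  have hbdd : ∀ w : ι → ℚ, w ≠ 0 → ∃ j, 0 < ((fromRows N (-N)).map Int.cast *ᵥ w) j := by
    intro w hw
    obtain ⟨i, hi⟩ := Function.ne_iff.1 hw
    rcases hi.lt_or_gt with h | h
    · exact ⟨.inr (.inr i), by simpa [hmulVec] using h⟩
    · exact ⟨.inl (.inr i), by simpa [hmulVec] using h⟩
  have hfeas : (fromRows N (-N)).map Int.cast *ᵥ x ≤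
      Int.cast ∘ Sum.elim (Sum.elim hi u) (-Sum.elim lo l) := by
    simp only [hmulVec, Pi.le_def, Function.comp_apply, Sum.forall, Sum.elim_inl, Sum.elim_inr,
      Pi.neg_apply, Int.cast_neg, neg_le_neg_iff]
    exact ⟨⟨fun j => (hx j).2, fun i => (hxb i).2⟩, fun j => (hx j).1, fun i => (hxb i).1⟩
  obtain ⟨z, hz⟩ := hN.exists_int_mulVec_le _ hbdd hfeas
  simp only [N, fromRows_mulVec, neg_mulVec, one_mulVec, Pi.le_def, Sum.forall, Sum.elim_inl,
    Sum.elim_inr, Pi.neg_apply, neg_le_neg_iff] at hz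
  exact ⟨z, fun j => ⟨hz.2.1 j, hz.1.1 j⟩, fun i => ⟨hz.2.2 i, hz.1.2 i⟩⟩

theorem exists_equitable_bicoloring {κ : Type*} [Fintype κ] {B : Matrix ι κ ℤ}
    (hB : B.IsTotallyUnimodular) :
    ∃ S : Finset ι, ∀ j, ∑ i ∈ S, B i j - ∑ i ∈ Sᶜ, B i j ∈ ({-1, 0, 1} : Set ℤ) := by
  set s : κ → ℤ := fun j => ∑ i, B i j
  have hhalf : ∀ j, ((s j / 2 : ℤ) : ℚ) ≤ (Bᵀ.map Int.cast *ᵥ fun _ => (1 / 2 : ℚ)) j ∧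
      (Bᵀ.map Int.cast *ᵥ fun _ => (1 / 2 : ℚ)) j ≤ ((s j - s j / 2 : ℤ) : ℚ) := fun j => by
    have hx : (Bᵀ.map Int.cast *ᵥ fun _ => (1 / 2 : ℚ)) j = s j / 2 := by
      simp [mulVec, dotProduct, s, sum_mul, div_eq_mul_inv]
    have hlo : ((2 * (s j / 2) : ℤ) : ℚ) ≤ s j := Int.cast_le.2 (by omega)
    have hhi : (s j : ℚ) ≤ ((2 * (s j / 2) + 1 : ℤ) : ℚ) := Int.cast_le.2 (by omega)
    push_cast at hlo hhi ⊢
    rw [hx]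
    constructor <;> linarith
  -- the integral point inside the box around the all-`1/2` vector is the indicator of `S`
  obtain ⟨z, hcol, hbox⟩ := hB.transpose.exists_int_mem_box (fun j => s j / 2)
    (fun j => s j - s j / 2) 0 1 hhalf (fun i => by norm_num)
  refine ⟨({i | z i = 1} : Finset ι), fun j => ?_⟩
  have hsum : ∑ i ∈ {i | z i = 1}, B i j = (Bᵀ *ᵥ z) j := by
    rw [sum_filter]
    refine sum_congr rfl fun i _ => ?_
    obtain ⟨h0, h1⟩ := hbox i
    rcases (show z i = 0 ∨ z i = 1 by simp at h0 h1; omega) with h | h <;> simp [h]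
  have hcompl := sum_compl_add_sum ({i | z i = 1} : Finset ι) (fun i => B i j)
  have hcolj := hcol j
  have hs : s j = ∑ i, B i j := rfl
  simp only [Set.mem_insert_iff, Set.mem_singleton_iff]
  omega

end IsTotallyUnimodular

end Matrix

theorem IsTotallyUnimodular'.isTotallyUnimodular {m n : ℕ} {A : Matrix (Fin m) (Fin n) ℤ}
    (hA : IsTotallyUnimodular' A) : A.IsTotallyUnimodular := fun k f g hf hg => by
  have h := hA k f g hf hg
  simp only [Set.mem_insert_iff, Set.mem_singleton_iff] at h
  rcases h with h | h | h
  exacts [⟨-1, by simp [h]⟩, ⟨0, by simp [h]⟩, ⟨1, by simp [h]⟩]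

open Finset in
theorem ghouila_houri_necessity_general {m n : ℕ} (A : Matrix (Fin m) (Fin n) ℤ)
    (hTU : IsTotallyUnimodular' A) :
    ∀ I : Finset (Fin m), ∃ I₁ ⊆ I, ∀ j : Fin n,
      (∑ i ∈ I₁, A i j) - (∑ i ∈ I \ I₁, A i j) ∈ ({-1, 0, 1} : Set ℤ) := by
  intro I
  obtain ⟨S, hS⟩ :=
    (hTU.isTotallyUnimodular.submatrix ((↑) : I → Fin m) id).exists_equitable_bicoloring
  have hSI : S.map (Function.Embedding.subtype _) ⊆ I := fun i hi => by
    obtain ⟨i, -, rfl⟩ := mem_map.1 hi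
    exact i.2
  refine ⟨S.map (Function.Embedding.subtype _), hSI, fun j => ?_⟩
  rw [sum_sdiff_eq_sub hSI, sum_map, ← sum_coe_sort I, ← sum_compl_add_sum S]
  simpa using hS j

open Finset in
theorem ghouila_houri_necessity {m n : ℕ} (A : Matrix (Fin m) (Fin n) ℤ)
    (hval : ∀ i j, A i j ∈ ({-1, 0, 1} : Set ℤ))
    (hTU : IsTotallyUnimodular' A) :
    ∀ I : Finset (Fin m), ∃ I₁ ⊆ I, ∀ j : Fin n,
      (∑ i ∈ I₁, A i j) - (∑ i ∈ I \ I₁, A i j) ∈ ({-1, 0, 1} : Set ℤ) :=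
  ghouila_houri_necessity_general A hTU
end

section
/- Let f: ℝⁿ × ℝⁿ → ℝ be defined by f(λ, τ) = Σ_{i,j} exp(λ_i + τ_j − M_{ij}) for a fixed matrix M ∈ ℝ^{n×n} satisfying M_{ij} ≥ 0. Then on the region where f(λ, τ) ≤ 1, the gradient map (λ,τ) ↦ (r(B), l(B)) with B_{ij} = exp(λ_i + τ_j − M_{ij}), r(B) = B1ₙ, l(B) = Bᵀ1ₙ, is 4-Lipschitz in the Euclidean norm: ‖(r(B) − r(B'), l(B) − l(B'))‖ ≤ 4‖(λ − λ', τ − τ')‖ for any two points (λ,τ), (λ',τ') in that region. -/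
/-!
Since `|eˣ - eʸ| ≤ (eˣ + eʸ) |x - y|`, every entry of `B - B'` is bounded by the corresponding
entry of the weight matrix `W = B + B'` times `|Δλᵢ + Δτⱼ|`, and `W` has total mass at most `2`.
Weighted Cauchy–Schwarz along each row, together with `(p + q)² ≤ 2 (p² + q²)` and the fact
that all row and column sums of `W` are at most `2`, bounds the squared row-marginal difference
by `2 · 2² · ‖(Δλ, Δτ)‖²`; the same holds for the columns, which gives `4² ‖(Δλ, Δτ)‖²` in total.
-/

open Finset Real

theorem Real.abs_exp_sub_exp_le (x y : ℝ) : |exp x - exp y| ≤ (exp x + exp y) * |x - y| := by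
  wlog hyx : y ≤ x generalizing x y
  · rw [abs_sub_comm, abs_sub_comm x, add_comm]
    exact this y x (le_of_not_ge hyx)
  have hfactor : exp x - exp y = exp x * (1 - exp (y - x)) := by
    rw [mul_sub, ← exp_add]
    ring_nf
  rw [abs_of_nonneg (sub_nonneg.2 (exp_le_exp.2 hyx)), abs_of_nonneg (sub_nonneg.2 hyx), hfactor]
  calc exp x * (1 - exp (y - x)) ≤ exp x * (x - y) :=
        mul_le_mul_of_nonneg_left (by linarith [add_one_le_exp (y - x)]) (exp_pos x).le
    _ ≤ (exp x + exp y) * (x - y) :=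
        mul_le_mul_of_nonneg_right (by linarith [exp_pos y]) (sub_nonneg.2 hyx)

lemma sq_sum_sub_sum_le {κ : Type*} [Fintype κ] {a b w d : κ → ℝ} (hw : ∀ j, 0 ≤ w j)
    (hab : ∀ j, |a j - b j| ≤ w j * |d j|) :
    (∑ j, a j - ∑ j, b j) ^ 2 ≤ (∑ j, w j) * ∑ j, w j * d j ^ 2 := by
  rw [← sum_sub_distrib]
  refine sum_sq_le_sum_mul_sum_of_sq_le_mul _ (fun j _ ↦ hw j)
    (fun j _ ↦ mul_nonneg (hw j) (sq_nonneg _)) fun j _ ↦ ?_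
  calc (a j - b j) ^ 2 = |a j - b j| ^ 2 := (sq_abs _).symm
    _ ≤ (w j * |d j|) ^ 2 := by gcongr; exact hab j
    _ = w j * (w j * d j ^ 2) := by rw [mul_pow, sq_abs]; ring

section Marginals

variable {ι κ : Type*} [Fintype ι] [Fintype κ] {a b w : ι → κ → ℝ} {u : ι → ℝ} {v : κ → ℝ}
  {s : ℝ}

lemma sum_sum_mul_sq_add_sq_le (hrow : ∀ i, ∑ j, w i j ≤ s)
    (hcol : ∀ j, ∑ i, w i j ≤ s) :
    ∑ i, ∑ j, w i j * (u i ^ 2 + v j ^ 2) ≤ s * (∑ i, u i ^ 2 + ∑ j, v j ^ 2) := by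
  have hu : ∑ i, ∑ j, w i j * u i ^ 2 ≤ s * ∑ i, u i ^ 2 := by
    rw [mul_sum]
    gcongr with i
    rw [← sum_mul]
    exact mul_le_mul_of_nonneg_right (hrow i) (sq_nonneg _)
  have hv : ∑ j, ∑ i, w i j * v j ^ 2 ≤ s * ∑ j, v j ^ 2 := by
    rw [mul_sum]
    gcongr with j
    rw [← sum_mul]
    exact mul_le_mul_of_nonneg_right (hcol j) (sq_nonneg _)
  simp only [mul_add, sum_add_distrib]
  rw [sum_comm (f := fun i j ↦ w i j * v j ^ 2)]
  linarith

lemma sum_sq_sum_sub_sum_le (hw : ∀ i j, 0 ≤ w i j)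
    (hab : ∀ i j, |a i j - b i j| ≤ w i j * |u i + v j|) (hrow : ∀ i, ∑ j, w i j ≤ s)
    (hcol : ∀ j, ∑ i, w i j ≤ s) (hs : 0 ≤ s) :
    ∑ i, (∑ j, a i j - ∑ j, b i j) ^ 2 ≤ 2 * s ^ 2 * (∑ i, u i ^ 2 + ∑ j, v j ^ 2) := by
  have hrow_sq : ∀ i, (∑ j, a i j - ∑ j, b i j) ^ 2
      ≤ 2 * s * ∑ j, w i j * (u i ^ 2 + v j ^ 2) := fun i ↦ calc
    _ ≤ (∑ j, w i j) * ∑ j, w i j * (u i + v j) ^ 2 := sq_sum_sub_sum_le (hw i) (hab i)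
    _ ≤ s * ∑ j, w i j * (2 * (u i ^ 2 + v j ^ 2)) := by
        gcongr with j
        · exact sum_nonneg fun j _ ↦ mul_nonneg (hw i j) (sq_nonneg _)
        · exact hrow i
        · exact hw i j
        · exact add_sq_le
    _ = 2 * s * ∑ j, w i j * (u i ^ 2 + v j ^ 2) := by
        rw [mul_assoc, mul_sum, mul_sum, mul_sum]
        congr 1 with j
        ring
  calc ∑ i, (∑ j, a i j - ∑ j, b i j) ^ 2
      ≤ 2 * s * ∑ i, ∑ j, w i j * (u i ^ 2 + v j ^ 2) := by
        rw [mul_sum]; exact sum_le_sum fun i _ ↦ hrow_sq i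
    _ ≤ 2 * s * (s * (∑ i, u i ^ 2 + ∑ j, v j ^ 2)) := by
        gcongr; exact sum_sum_mul_sq_add_sq_le hrow hcol
    _ = 2 * s ^ 2 * (∑ i, u i ^ 2 + ∑ j, v j ^ 2) := by ring

lemma sum_sq_marginal_sub_le (hw : ∀ i j, 0 ≤ w i j)
    (hab : ∀ i j, |a i j - b i j| ≤ w i j * |u i + v j|) (htot : ∑ i, ∑ j, w i j ≤ s) :
    ∑ i, (∑ j, a i j - ∑ j, b i j) ^ 2 + ∑ j, (∑ i, a i j - ∑ i, b i j) ^ 2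
      ≤ (2 * s) ^ 2 * (∑ i, u i ^ 2 + ∑ j, v j ^ 2) := by
  have hrow : ∀ i, ∑ j, w i j ≤ s := fun i ↦
    (single_le_sum (fun i _ ↦ sum_nonneg fun j _ ↦ hw i j) (mem_univ i)).trans htot
  have htot' : ∑ j, ∑ i, w i j ≤ s := by rwa [sum_comm]
  have hcol : ∀ j, ∑ i, w i j ≤ s := fun j ↦
    (single_le_sum (fun j _ ↦ sum_nonneg fun i _ ↦ hw i j) (mem_univ j)).trans htot'
  have hs : 0 ≤ s := (sum_nonneg fun i _ ↦ sum_nonneg fun j _ ↦ hw i j).trans htot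
  have hrows := sum_sq_sum_sub_sum_le hw hab hrow hcol hs
  have hcols := sum_sq_sum_sub_sum_le (a := fun j i ↦ a i j) (b := fun j i ↦ b i j)
    (fun j i ↦ hw i j) (fun j i ↦ add_comm (u i) (v j) ▸ hab i j) hcol hrow hs
  linarith

end Marginals

theorem marginal_map_lipschitz_general {n : ℕ} (M : Matrix (Fin n) (Fin n) ℝ)
    (lam tau lam' tau' : Fin n → ℝ)
    (hf : ∑ i, ∑ j, exp (lam i + tau j - M i j) ≤ 1)
    (hf' : ∑ i, ∑ j, exp (lam' i + tau' j - M i j) ≤ 1) :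
    Real.sqrt ((∑ i, ((∑ j, exp (lam i + tau j - M i j))
                        - ∑ j, exp (lam' i + tau' j - M i j)) ^ 2)
             + ∑ j, ((∑ i, exp (lam i + tau j - M i j))
                        - ∑ i, exp (lam' i + tau' j - M i j)) ^ 2)
      ≤ 4 * Real.sqrt ((∑ i, (lam i - lam' i) ^ 2) + ∑ j, (tau j - tau' j) ^ 2) := by
  have hab : ∀ i j, |exp (lam i + tau j - M i j) - exp (lam' i + tau' j - M i j)|
      ≤ (exp (lam i + tau j - M i j) + exp (lam' i + tau' j - M i j))
        * |(lam i - lam' i) + (tau j - tau' j)| := fun i j ↦ by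
    convert abs_exp_sub_exp_le _ _ using 3
    ring
  have htot : ∑ i, ∑ j, (exp (lam i + tau j - M i j) + exp (lam' i + tau' j - M i j)) ≤ 2 := by
    simp only [sum_add_distrib]
    linarith
  have key := sum_sq_marginal_sub_le (fun i j ↦ by positivity) hab htot
  calc _ ≤ √((2 * 2) ^ 2 * ((∑ i, (lam i - lam' i) ^ 2) + ∑ j, (tau j - tau' j) ^ 2)) :=
        sqrt_le_sqrt key
    _ = 4 * √((∑ i, (lam i - lam' i) ^ 2) + ∑ j, (tau j - tau' j) ^ 2) := by
        rw [sqrt_mul (by positivity), sqrt_sq (by positivity)]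
        norm_num

open Finset Real in
/-- Lipschitz continuity of the marginal (gradient) map of the dual entropic OT
objective on the sublevel region `f(λ, τ) ≤ 1`, with constant `4`. -/
theorem marginal_map_lipschitz {n : ℕ} (M : Matrix (Fin n) (Fin n) ℝ)
    (hM : ∀ i j, 0 ≤ M i j)
    (lam tau lam' tau' : Fin n → ℝ)
    (hf : ∑ i, ∑ j, exp (lam i + tau j - M i j) ≤ 1)
    (hf' : ∑ i, ∑ j, exp (lam' i + tau' j - M i j) ≤ 1) :
    Real.sqrt ((∑ i, ((∑ j, exp (lam i + tau j - M i j))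
                        - ∑ j, exp (lam' i + tau' j - M i j)) ^ 2)
             + ∑ j, ((∑ i, exp (lam i + tau j - M i j))
                        - ∑ i, exp (lam' i + tau' j - M i j)) ^ 2)
      ≤ 4 * Real.sqrt ((∑ i, (lam i - lam' i) ^ 2) + ∑ j, (tau j - tau' j) ^ 2) :=
  marginal_map_lipschitz_general M lam tau lam' tau' hf hf'
end

section
/- Let a_t ≥ 0 and θ_t > 0 satisfy a_{t+1}(1 − θ_{t+1})/θ_{t+1}² ≤ a_t(1 − θ_t)/θ_t² + c_t − c_{t+1} for all t ≥ 0, where c_t ≥ 0, θ_0 = 1, and 1/θ_t² = (1 − θ_{t+1})/θ_{t+1}². Then for all t ≥ 1, a_t ≤ θ_{t−1}² c_0 ≤ 4c_0/(t+1)², assuming additionally 0 < θ_t ≤ 2/(t+2). -/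
/-!
With `θ₀ = 1` the potential `a_t (1 - θ_t) / θ_t² + c_t` starts at `c₀`, and the recursion says
it never increases. The identity `1 / θ_{t-1}² = (1 - θ_t) / θ_t²` turns its first term into
`a_t / θ_{t-1}²`, so dropping `c_t ≥ 0` gives `a_t ≤ θ_{t-1}² c₀`; the bound on `θ` does the rest.
-/

theorem antitone_add_of_le_add_sub (u c : ℕ → ℝ) (h : ∀ t, u (t + 1) ≤ u t + c t - c (t + 1)) :
    Antitone (u + c) :=
  antitone_nat_of_succ_le fun t => by simp only [Pi.add_apply]; linarith [h t]

theorem accelerated_telescoping_general (a θ c : ℕ → ℝ)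
    (hθpos : ∀ t, 0 < θ t) (hc : ∀ t, 0 ≤ c t)
    (hθ0 : θ 0 = 1)
    (hθrec : ∀ t, 1 / (θ t) ^ 2 = (1 - θ (t + 1)) / (θ (t + 1)) ^ 2)
    (hθub : ∀ t, θ t ≤ 2 / ((t : ℝ) + 2))
    (hrec : ∀ t, a (t + 1) * (1 - θ (t + 1)) / (θ (t + 1)) ^ 2
      ≤ a t * (1 - θ t) / (θ t) ^ 2 + c t - c (t + 1)) :
    ∀ t : ℕ, 1 ≤ t →
      a t ≤ (θ (t - 1)) ^ 2 * c 0 ∧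
        (θ (t - 1)) ^ 2 * c 0 ≤ 4 * c 0 / ((t : ℝ) + 1) ^ 2 := by
  intro t ht
  obtain ⟨s, rfl⟩ := Nat.exists_eq_add_of_le' ht
  rw [Nat.add_sub_cancel]
  have hθs := hθpos s
  have hc0 := hc 0
  have potential : a (s + 1) * (1 - θ (s + 1)) / θ (s + 1) ^ 2 + c (s + 1) ≤ c 0 := by
    simpa [hθ0] using antitone_add_of_le_add_sub (fun t => a t * (1 - θ t) / θ t ^ 2) c hrec
      (Nat.zero_le (s + 1))
  have shift : a (s + 1) * (1 - θ (s + 1)) / θ (s + 1) ^ 2 = a (s + 1) / θ s ^ 2 := by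
    rw [mul_div_assoc, ← hθrec s, mul_one_div]
  constructor
  · rw [← div_le_iff₀' (by positivity)]
    linarith [hc (s + 1)]
  · calc θ s ^ 2 * c 0 ≤ (2 / ((s : ℝ) + 2)) ^ 2 * c 0 := by gcongr; exact hθub s
      _ = 4 * c 0 / (((s + 1 : ℕ) : ℝ) + 1) ^ 2 := by push_cast; field_simp; ring

/-- Telescoping argument for accelerated rates: if
`a_{t+1}(1-θ_{t+1})/θ_{t+1}² ≤ a_t(1-θ_t)/θ_t² + c_t - c_{t+1}` with `θ₀ = 1`,
`1/θ_t² = (1-θ_{t+1})/θ_{t+1}²`, and `0 < θ_t ≤ 2/(t+2)`, then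
`a_t ≤ θ_{t-1}² c₀ ≤ 4 c₀/(t+1)²` for every `t ≥ 1`. -/
theorem accelerated_telescoping (a θ c : ℕ → ℝ)
    (ha : ∀ t, 0 ≤ a t) (hθpos : ∀ t, 0 < θ t) (hc : ∀ t, 0 ≤ c t)
    (hθ0 : θ 0 = 1)
    (hθrec : ∀ t, 1 / (θ t) ^ 2 = (1 - θ (t + 1)) / (θ (t + 1)) ^ 2)
    (hθub : ∀ t, θ t ≤ 2 / ((t : ℝ) + 2))
    (hrec : ∀ t, a (t + 1) * (1 - θ (t + 1)) / (θ (t + 1)) ^ 2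
      ≤ a t * (1 - θ t) / (θ t) ^ 2 + c t - c (t + 1)) :
    ∀ t : ℕ, 1 ≤ t →
      a t ≤ (θ (t - 1)) ^ 2 * c 0 ∧
        (θ (t - 1)) ^ 2 * c 0 ≤ 4 * c 0 / ((t : ℝ) + 1) ^ 2 :=
  accelerated_telescoping_general a θ c hθpos hc hθ0 hθrec hθub hrec
end
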